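/- Let ζ ∈ ℝ³, α, β ≥ 0, and let ψ : ℝ³ \ {0} → ℝ be C¹ with |∇ψ(z)| ≤ C₀ |z|^{-α}(1 + s_ζ(z))^{-β} for all |z| ≥ ε, where ε > 0. Let R > 0 and f : ℝ³ → ℝ integrable, bounded, with support in the ball B_R, and set Λ := ∫ f(y) dy and M := ∫ |f(y)| dy. Then for every S > R + ε there exists C > 0 (depending on α, β, ε, R, S, ζ, C₀) such that for all |x| ≥ S, |(ψ * f)(x) - Λ ψ(x)| ≤ C |x|^{-α} (1 + s_ζ(x))^{-β} M. -/

import Mathlib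

/-!
For `‖y‖ ≤ R` and `‖x‖ ≥ S` the closed ball of radius `R` about `x` lies in `‖z‖ ≥ ‖x‖ - R`,
hence beyond `ε` and at distance at least `((S - R) / S) ‖x‖` from the origin, while `s_ζ` drops
by at most `|ζ| R` on it. So the gradient bound on that ball is a constant multiple of the weight
`|x|^{-α} (1 + s_ζ(x))^{-β}`, and the mean value theorem bounds `|ψ(x - y) - ψ(x)|` by `R` times
it. Integrating against `f` gives the claim, since
`(ψ * f)(x) - Λ ψ(x) = ∫ (ψ(x - y) - ψ(x)) f(y) dy`.
-/

open MeasureTheory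

/-- The anisotropic Oseen wake weight `s_ζ(x) = (|ζ||x| + ζ·x)/2`. -/
noncomputable def sw (ζ x : EuclideanSpace ℝ (Fin 3)) : ℝ :=
  (‖ζ‖ * ‖x‖ + (inner ℝ ζ x : ℝ)) / 2

open Function Metric

theorem sw_nonneg (ζ x : EuclideanSpace ℝ (Fin 3)) : 0 ≤ sw ζ x := by
  have := neg_abs_le (inner ℝ ζ x : ℝ)
  have := abs_real_inner_le_norm ζ x
  unfold sw; linarith

theorem sw_le_sw_add (ζ x z : EuclideanSpace ℝ (Fin 3)) :
    sw ζ x ≤ sw ζ z + ‖ζ‖ * ‖x - z‖ := by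
  have hnorm : ‖x‖ - ‖z‖ ≤ ‖x - z‖ := norm_sub_norm_le x z
  have hinner : (inner ℝ ζ x : ℝ) - inner ℝ ζ z ≤ ‖ζ‖ * ‖x - z‖ := by
    rw [← inner_sub_right]; exact real_inner_le_norm ζ (x - z)
  have := mul_le_mul_of_nonneg_left hnorm (norm_nonneg ζ)
  unfold sw; linarith

theorem one_add_sw_rpow_neg_le (ζ : EuclideanSpace ℝ (Fin 3)) {β R : ℝ} (hβ : 0 ≤ β)
    {x z : EuclideanSpace ℝ (Fin 3)} (hxz : ‖x - z‖ ≤ R) :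
    (1 + sw ζ z) ^ (-β) ≤ (1 + ‖ζ‖ * R) ^ β * (1 + sw ζ x) ^ (-β) := by
  have hR : 0 ≤ R := (norm_nonneg _).trans hxz
  have hx : 0 < 1 + sw ζ x := by linarith [sw_nonneg ζ x]
  have hζR : 0 < 1 + ‖ζ‖ * R := by positivity
  have hcomp : (1 + sw ζ x) / (1 + ‖ζ‖ * R) ≤ 1 + sw ζ z := by
    rw [div_le_iff₀ hζR]
    have := sw_le_sw_add ζ x z
    have := mul_le_mul_of_nonneg_left hxz (norm_nonneg ζ)
    nlinarith [sw_nonneg ζ z, mul_nonneg (sw_nonneg ζ z) (mul_nonneg (norm_nonneg ζ) hR)]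
  calc (1 + sw ζ z) ^ (-β) ≤ ((1 + sw ζ x) / (1 + ‖ζ‖ * R)) ^ (-β) :=
        Real.rpow_le_rpow_of_nonpos (div_pos hx hζR) hcomp (neg_nonpos.mpr hβ)
    _ = (1 + ‖ζ‖ * R) ^ β * (1 + sw ζ x) ^ (-β) := by
        rw [Real.div_rpow hx.le hζR.le, Real.rpow_neg hζR.le, div_inv_eq_mul, mul_comm]

theorem norm_rpow_neg_le_of_norm_sub_le {E : Type*} [SeminormedAddCommGroup E] {α R S : ℝ}
    (hα : 0 ≤ α) (hRS : R < S) {x z : E} (hx : S ≤ ‖x‖) (hxz : ‖x - z‖ ≤ R) :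
    ‖z‖ ^ (-α) ≤ ((S - R) / S) ^ (-α) * ‖x‖ ^ (-α) := by
  have hR : 0 ≤ R := (norm_nonneg _).trans hxz
  have hS : 0 < S := hR.trans_lt hRS
  have hk : 0 < (S - R) / S := div_pos (by linarith) hS
  have hkx : (S - R) / S * ‖x‖ ≤ ‖z‖ := by
    have := norm_sub_norm_le x z
    rw [div_mul_eq_mul_div, div_le_iff₀ hS]
    nlinarith [mul_le_mul_of_nonneg_left hx hR]
  calc ‖z‖ ^ (-α) ≤ ((S - R) / S * ‖x‖) ^ (-α) :=
        Real.rpow_le_rpow_of_nonpos (mul_pos hk (hS.trans_le hx)) hkx (neg_nonpos.mpr hα)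
    _ = ((S - R) / S) ^ (-α) * ‖x‖ ^ (-α) := Real.mul_rpow hk.le (norm_nonneg x)

theorem rpow_neg_mul_one_add_sw_rpow_neg_le (ζ : EuclideanSpace ℝ (Fin 3)) {α β R S : ℝ}
    (hα : 0 ≤ α) (hβ : 0 ≤ β) (hRS : R < S) {x z : EuclideanSpace ℝ (Fin 3)} (hx : S ≤ ‖x‖)
    (hxz : ‖x - z‖ ≤ R) :
    ‖z‖ ^ (-α) * (1 + sw ζ z) ^ (-β) ≤
      ((S - R) / S) ^ (-α) * (1 + ‖ζ‖ * R) ^ β * (‖x‖ ^ (-α) * (1 + sw ζ x) ^ (-β)) := by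
  have hnorm := norm_rpow_neg_le_of_norm_sub_le hα hRS hx hxz
  have := sw_nonneg ζ z
  calc ‖z‖ ^ (-α) * (1 + sw ζ z) ^ (-β)
      ≤ (((S - R) / S) ^ (-α) * ‖x‖ ^ (-α)) * ((1 + ‖ζ‖ * R) ^ β * (1 + sw ζ x) ^ (-β)) :=
        mul_le_mul hnorm (one_add_sw_rpow_neg_le ζ hβ hxz) (by positivity)
          ((by positivity : (0 : ℝ) ≤ ‖z‖ ^ (-α)).trans hnorm)
    _ = _ := by ring

theorem abs_sub_le_of_norm_gradient_le {F : Type*} [NormedAddCommGroup F] [InnerProductSpace ℝ F]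
    [CompleteSpace F] {ψ : F → ℝ} {x : F} {R L : ℝ}
    (hd : ∀ z ∈ closedBall x R, DifferentiableAt ℝ ψ z)
    (hL : ∀ z ∈ closedBall x R, ‖gradient ψ z‖ ≤ L) {y : F} (hy : ‖y‖ ≤ R) :
    |ψ (x - y) - ψ x| ≤ L * ‖y‖ := by
  have hfderiv : ∀ z ∈ closedBall x R, ‖fderiv ℝ ψ z‖ ≤ L := fun z hz => by
    simpa [gradient] using hL z hz
  simpa using (convex_closedBall x R).norm_image_sub_le_of_norm_fderiv_le hd hfderiv
    (mem_closedBall_self ((norm_nonneg y).trans hy)) (y := x - y) (by simpa [dist_eq_norm])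
theorem abs_integral_mul_sub_integral_mul_le {α : Type*} [MeasurableSpace α] {μ : Measure α}
    {s : Set α} (hs : MeasurableSet s) {f g : α → ℝ} (hf : Integrable f μ) (hfs : support f ⊆ s)
    (hg : AEStronglyMeasurable g (μ.restrict s)) {c K : ℝ} (hK : ∀ y ∈ s, |g y - c| ≤ K) :
    |∫ y, g y * f y ∂μ - (∫ y, f y ∂μ) * c| ≤ K * ∫ y, |f y| ∂μ := by
  set h : α → ℝ := s.indicator fun y => g y - c
  have hgf : ∀ y, g y * f y = h y * f y + c * f y := fun y => by
    by_cases hy : y ∈ s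
    · simp only [h, Set.indicator_of_mem hy]; ring
    · simp [h, Set.indicator_of_notMem hy, notMem_support.mp (mt (@hfs y) hy)]
  have hhf : ∀ y, ‖h y * f y‖ ≤ K * |f y| := fun y => by
    by_cases hy : y ∈ s
    · simpa [h, Set.indicator_of_mem hy, abs_mul] using
        mul_le_mul_of_nonneg_right (hK y hy) (abs_nonneg (f y))
    · simp [h, Set.indicator_of_notMem hy, notMem_support.mp (mt (@hfs y) hy)]
  have hh : AEStronglyMeasurable h μ :=
    (aestronglyMeasurable_indicator_iff hs).mpr (hg.sub aestronglyMeasurable_const)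
  have hint : Integrable (fun y => h y * f y) μ :=
    (hf.abs.const_mul K).mono' (hh.mul hf.aestronglyMeasurable) (.of_forall hhf)
  calc |∫ y, g y * f y ∂μ - (∫ y, f y ∂μ) * c|
      = ‖∫ y, h y * f y ∂μ‖ := by
        simp_rw [hgf, integral_add hint (hf.const_mul c), integral_const_mul, Real.norm_eq_abs]
        ring_nf
    _ ≤ ∫ y, K * |f y| ∂μ := norm_integral_le_of_norm_le (hf.abs.const_mul K) (.of_forall hhf)
    _ = K * ∫ y, |f y| ∂μ := integral_const_mul K _

theorem abs_integral_comp_sub_mul_sub_le {F : Type*} [NormedAddCommGroup F]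
    [InnerProductSpace ℝ F] [CompleteSpace F] [MeasurableSpace F] [OpensMeasurableSpace F]
    {μ : Measure F} {ψ f : F → ℝ} {x : F} {R L : ℝ} (hR : 0 ≤ R) (hf : Integrable f μ)
    (hfs : support f ⊆ closedBall 0 R) (hd : ∀ z ∈ closedBall x R, DifferentiableAt ℝ ψ z)
    (hL : ∀ z ∈ closedBall x R, ‖gradient ψ z‖ ≤ L) :
    |∫ y, ψ (x - y) * f y ∂μ - (∫ y, f y ∂μ) * ψ x| ≤ R * L * ∫ y, |f y| ∂μ := by
  have hcont : ContinuousOn (fun y => ψ (x - y)) (closedBall 0 R) := by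
    refine ContinuousOn.comp (fun z hz => (hd z hz).continuousAt.continuousWithinAt)
      (continuous_const.sub continuous_id).continuousOn fun y hy => ?_
    simpa [dist_eq_norm] using hy
  refine abs_integral_mul_sub_integral_mul_le measurableSet_closedBall hf hfs
    (hcont.aestronglyMeasurable measurableSet_closedBall) fun y hy => ?_
  have hy : ‖y‖ ≤ R := by simpa using hy
  have hL0 : 0 ≤ L := (norm_nonneg _).trans (hL x (mem_closedBall_self hR))
  calc |ψ (x - y) - ψ x| ≤ L * ‖y‖ := abs_sub_le_of_norm_gradient_le hd hL hy
    _ ≤ L * R := by gcongr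
    _ = R * L := mul_comm L R

theorem stmt_9_general (ζ : EuclideanSpace ℝ (Fin 3)) (α β : ℝ) (hα : 0 ≤ α) (hβ : 0 ≤ β)
    (ε : ℝ) (hε : 0 < ε)
    (ψ : EuclideanSpace ℝ (Fin 3) → ℝ) (hψ : ContDiffOn ℝ 1 ψ {0}ᶜ)
    (C₀ : ℝ) (hC₀ : 0 < C₀)
    (hgrad : ∀ z : EuclideanSpace ℝ (Fin 3), ε ≤ ‖z‖ →
      ‖gradient ψ z‖ ≤ C₀ * ‖z‖ ^ (-α) * (1 + sw ζ z) ^ (-β))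
    (R : ℝ) (hR : 0 < R) (f : EuclideanSpace ℝ (Fin 3) → ℝ) (hf : Integrable f)
    (hsupp : Function.support f ⊆ Metric.ball 0 R)
    (S : ℝ) (hS : R + ε < S) :
    ∃ C > (0:ℝ), ∀ x : EuclideanSpace ℝ (Fin 3), S ≤ ‖x‖ →
      |(∫ y, ψ (x - y) * f y) - (∫ y, f y) * ψ x|
        ≤ C * ‖x‖ ^ (-α) * (1 + sw ζ x) ^ (-β) * (∫ y, |f y|) := by
  have hRS : R < S := by linarith
  set k := (S - R) / S
  have hk : 0 < k := div_pos (by linarith) (by linarith)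
  set L := C₀ * k ^ (-α) * (1 + ‖ζ‖ * R) ^ β
  refine ⟨R * L, by positivity, fun x hx => ?_⟩
  have hfar : ∀ z ∈ closedBall x R, ε ≤ ‖z‖ := fun z hz => by
    rw [mem_closedBall, dist_comm, dist_eq_norm] at hz
    linarith [norm_sub_norm_le x z]
  have hdiff : ∀ z ∈ closedBall x R, DifferentiableAt ℝ ψ z := fun z hz =>
    have hz0 : z ≠ 0 := norm_pos_iff.mp (hε.trans_le (hfar z hz))
    (hψ.contDiffAt (isOpen_compl_singleton.mem_nhds hz0)).differentiableAt one_ne_zero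
  have hgradx : ∀ z ∈ closedBall x R,
      ‖gradient ψ z‖ ≤ L * (‖x‖ ^ (-α) * (1 + sw ζ x) ^ (-β)) := fun z hz => by
    have hxz : ‖x - z‖ ≤ R := by rwa [mem_closedBall, dist_comm, dist_eq_norm] at hz
    calc ‖gradient ψ z‖ ≤ C₀ * (‖z‖ ^ (-α) * (1 + sw ζ z) ^ (-β)) :=
          (hgrad z (hfar z hz)).trans_eq (mul_assoc _ _ _)
      _ ≤ C₀ * (k ^ (-α) * (1 + ‖ζ‖ * R) ^ β * (‖x‖ ^ (-α) * (1 + sw ζ x) ^ (-β))) :=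
          mul_le_mul_of_nonneg_left (rpow_neg_mul_one_add_sw_rpow_neg_le ζ hα hβ hRS hx hxz)
            hC₀.le
      _ = _ := by ring
  calc _ ≤ R * (L * (‖x‖ ^ (-α) * (1 + sw ζ x) ^ (-β))) * ∫ y, |f y| :=
        abs_integral_comp_sub_mul_sub_le hR.le hf (hsupp.trans ball_subset_closedBall) hdiff hgradx
    _ = _ := by ring

/-- If `ψ` is `C¹` away from the origin with `|∇ψ(z)| ≤ C₀|z|^{-α}(1+s_ζ(z))^{-β}` for
`|z| ≥ ε`, and `f` is integrable, bounded, with support in `B_R`, then for every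
`S > R + ε` there is `C > 0` such that for `|x| ≥ S`,
`|(ψ*f)(x) - (∫f) ψ(x)| ≤ C |x|^{-α} (1+s_ζ(x))^{-β} ∫|f|`. -/
theorem stmt_9 (ζ : EuclideanSpace ℝ (Fin 3)) (α β : ℝ) (hα : 0 ≤ α) (hβ : 0 ≤ β)
    (ε : ℝ) (hε : 0 < ε)
    (ψ : EuclideanSpace ℝ (Fin 3) → ℝ) (hψ : ContDiffOn ℝ 1 ψ {0}ᶜ)
    (C₀ : ℝ) (hC₀ : 0 < C₀)
    (hgrad : ∀ z : EuclideanSpace ℝ (Fin 3), ε ≤ ‖z‖ →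
      ‖gradient ψ z‖ ≤ C₀ * ‖z‖ ^ (-α) * (1 + sw ζ z) ^ (-β))
    (R : ℝ) (hR : 0 < R) (f : EuclideanSpace ℝ (Fin 3) → ℝ) (hf : Integrable f)
    (hbdd : ∃ B : ℝ, ∀ y, |f y| ≤ B)
    (hsupp : Function.support f ⊆ Metric.ball 0 R)
    (S : ℝ) (hS : R + ε < S) :
    ∃ C > (0:ℝ), ∀ x : EuclideanSpace ℝ (Fin 3), S ≤ ‖x‖ →
      |(∫ y, ψ (x - y) * f y) - (∫ y, f y) * ψ x|
        ≤ C * ‖x‖ ^ (-α) * (1 + sw ζ x) ^ (-β) * (∫ y, |f y|) :=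
  stmt_9_general ζ α β hα hβ ε hε ψ hψ C₀ hC₀ hgrad R hR f hf hsupp S hS
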